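/- Let q = 2. For every positive integer s, the polynomial ζ(−s, X) := ∑_{d≥0} S_d(s) X^d ∈ (F_2[x])[X] is divisible by X − 1 but not by (X − 1)²; that is, every negative integer −s is a zero of the zeta function of F_2[x] with order of vanishing exactly one. -/

import Mathlib

/-!
Write `T N s = ∑_{deg a < N} a ^ s`. Over `𝔽₂`, splitting off the coefficient of `x ^ d`
gives `S_d(s) = T (d + 1) s - T d s`. Expanding `a ^ s` as a product of `s` linear forms in the
coefficients of `a`, every term of `T N s` is a monomial of degree `s` in `N` variables summed
over `𝔽₂ ^ N`, so `T N s = 0` once `N > s` (Chevalley–Warning). Hence `ζ(-s, 1) = ∑_d S_d(s)`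
telescopes to `T (s + 1) s - T 0 s = 0`.

For the simple zero, reduce modulo `x`: the constant term of `S_d(s)` is `∑_{c ∈ 𝔽₂ ^ d} c₀`,
which is `1` for `d ≤ 1` and `0` for `d ≥ 2`, so `ζ(-s, X) ≡ 1 + X = X - 1`, and `(X - 1) ^ 2`
does not divide that.
-/

open Polynomial

/-- `lq q k` is the sum of the base-`q` digits of `k`. -/
def lq (q k : ℕ) : ℕ := (Nat.digits q k).sum

/-- `Spow F d s = ∑_{a monic, deg a = d} a^s ∈ F[x]`, the power sum over all monic polynomials
of degree `d`, realized as the sum over all coefficient tuples `c : Fin d → F`. -/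
noncomputable def Spow (F : Type*) [Field F] [Fintype F] (d s : ℕ) : F[X] :=
  ∑ c : Fin d → F, (X ^ d + ∑ i : Fin d, C (c i) * X ^ (i : ℕ)) ^ s

open Finset

theorem pow_sum_C_mul_X_pow {R : Type*} [CommSemiring R] {N : ℕ} (c : Fin N → R) (s : ℕ) :
    (∑ i : Fin N, C (c i) * X ^ (i : ℕ)) ^ s =
      ∑ f : Fin s → Fin N, C (∏ k, c (f k)) * X ^ (∑ k, (f k : ℕ)) := by
  rw [sum_pow', Fintype.piFinset_univ]
  simp [prod_mul_distrib, prod_pow_eq_pow_sum]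

section

variable {K : Type*} [Field K] [Fintype K]

theorem sum_prod_apply_eq_zero {σ ι : Type*} [Fintype σ] [DecidableEq σ] [Fintype ι]
    (f : ι → σ) (h : Fintype.card ι < Fintype.card σ) :
    ∑ c : σ → K, ∏ k, c (f k) = 0 := by
  have hdeg : (∏ k, MvPolynomial.X (f k) : MvPolynomial σ K).totalDegree
      < (Fintype.card K - 1) * Fintype.card σ := by
    calc _ ≤ ∑ k : ι, (MvPolynomial.X (f k) : MvPolynomial σ K).totalDegree :=
          MvPolynomial.totalDegree_finsetProd _ _
      _ = Fintype.card ι := by simp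
      _ < _ := h.trans_le (Nat.le_mul_of_pos_left _ (Nat.sub_pos_of_lt Fintype.one_lt_card))
  simpa using MvPolynomial.sum_eval_eq_zero _ hdeg

variable (K) in
noncomputable def powSumDegreeLT (N s : ℕ) : K[X] :=
  ∑ c : Fin N → K, (∑ i : Fin N, C (c i) * X ^ (i : ℕ)) ^ s

theorem powSumDegreeLT_eq_zero {N s : ℕ} (h : s < N) : powSumDegreeLT K N s = 0 := by
  simp_rw [powSumDegreeLT, pow_sum_C_mul_X_pow]
  rw [sum_comm]
  refine sum_eq_zero fun f _ => ?_
  rw [← sum_mul, ← map_sum, sum_prod_apply_eq_zero f (by simpa using h), map_zero, zero_mul]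

theorem powSumDegreeLT_zero_left {s : ℕ} (hs : s ≠ 0) : powSumDegreeLT K 0 s = 0 := by
  simp [powSumDegreeLT, hs]

end

theorem powSumDegreeLT_succ (d s : ℕ) :
    powSumDegreeLT (ZMod 2) (d + 1) s = powSumDegreeLT (ZMod 2) d s + Spow (ZMod 2) d s := by
  rw [powSumDegreeLT, ← (Fin.snocEquiv fun _ => ZMod 2).sum_comp, Fintype.sum_prod_type]
  simp only [Fin.snocEquiv_apply, Fin.sum_univ_castSucc, Fin.snoc_castSucc, Fin.snoc_last]
  rw [show (univ : Finset (ZMod 2)) = {0, 1} from rfl, sum_pair zero_ne_one]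
  simp [powSumDegreeLT, Spow, add_comm]

theorem Spow_eq_sub (d s : ℕ) :
    Spow (ZMod 2) d s = powSumDegreeLT (ZMod 2) (d + 1) s - powSumDegreeLT (ZMod 2) d s :=
  eq_sub_of_add_eq' (powSumDegreeLT_succ d s).symm

theorem Spow_eq_zero {d s : ℕ} (h : s < d) : Spow (ZMod 2) d s = 0 := by
  rw [Spow_eq_sub, powSumDegreeLT_eq_zero (by omega), powSumDegreeLT_eq_zero h, sub_self]

theorem sum_range_Spow {s : ℕ} (hs : s ≠ 0) :
    ∑ d ∈ range (s + 1), Spow (ZMod 2) d s = 0 := by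
  simp_rw [Spow_eq_sub]
  rw [sum_range_sub (fun d => powSumDegreeLT (ZMod 2) d s), powSumDegreeLT_eq_zero (by omega),
    powSumDegreeLT_zero_left hs, sub_self]

theorem finsum_Spow_eq_sum (s : ℕ) :
    ∑ᶠ d : ℕ, C (Spow (ZMod 2) d s) * X ^ d =
      ∑ d ∈ range (s + 1), C (Spow (ZMod 2) d s) * X ^ d := by
  refine finsum_eq_sum_of_support_subset _ fun d hd => ?_
  by_contra hds
  simp_all [Spow_eq_zero]

theorem isIdempotentElem_zmod_two (c : ZMod 2) : IsIdempotentElem c :=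
  (sq c).symm.trans (ZMod.pow_card c)

theorem eval_zero_Spow {s : ℕ} (hs : s ≠ 0) (d : ℕ) :
    (Spow (ZMod 2) d s).eval 0 = if d ≤ 1 then 1 else 0 := by
  rcases d with _ | d
  · simp [Spow]
  have heval : ∀ c : Fin (d + 1) → ZMod 2,
      (X ^ (d + 1) + ∑ i : Fin (d + 1), C (c i) * X ^ (i : ℕ)).eval 0 ^ s = c 0 := by
    intro c
    simp [eval_finsetSum, Fin.sum_univ_succ, (isIdempotentElem_zmod_two _).pow_eq hs]
  simp only [Spow, eval_finsetSum, eval_pow, heval]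
  rcases d with _ | d
  · decide
  · simpa using sum_prod_apply_eq_zero (K := ZMod 2) (fun _ : Unit => (0 : Fin (d + 2))) (by simp)

theorem map_eval_zero_zeta {s : ℕ} (hs : s ≠ 0) :
    (∑ d ∈ range (s + 1), C (Spow (ZMod 2) d s) * X ^ d).map (evalRingHom 0) = X - 1 := by
  simp only [Polynomial.map_sum, Polynomial.map_mul, map_C, Polynomial.map_pow, map_X,
    coe_evalRingHom, eval_zero_Spow hs]
  rw [← sum_subset (range_subset_range.2 (by omega : 2 ≤ s + 1)) fun d _ hd => by simp_all]
  simp [sum_range_succ, CharTwo.sub_eq_add, add_comm]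

/-- Let `q = 2`. For every positive integer `s`, the polynomial
`ζ(−s, X) = ∑_{d ≥ 0} S_d(s) X^d ∈ (F_2[x])[X]` is divisible by `X − 1` but not by `(X − 1)²`;
i.e., every negative integer `−s` is a zero of the zeta function of `F_2[x]` with order of
vanishing exactly one. -/
theorem statement4 (s : ℕ) (hs : 1 ≤ s) :
    (X - 1 : Polynomial (Polynomial (ZMod 2))) ∣
        (∑ᶠ d : ℕ, C (Spow (ZMod 2) d s) * X ^ d) ∧
      ¬ (X - 1 : Polynomial (Polynomial (ZMod 2))) ^ 2 ∣
        (∑ᶠ d : ℕ, C (Spow (ZMod 2) d s) * X ^ d) := by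
  have hs0 : s ≠ 0 := by omega
  rw [finsum_Spow_eq_sum, ← C_1]
  constructor
  · rw [dvd_iff_isRoot, IsRoot, eval_finsetSum]
    simpa using sum_range_Spow hs0
  · intro h
    have hmod : (X - C 1 : (ZMod 2)[X]) ^ 2 ∣ (X - C 1) ^ 1 := by
      simpa [map_eval_zero_zeta hs0] using Polynomial.map_dvd (evalRingHom 0) h
    exact absurd ((pow_dvd_pow_iff (X_sub_C_ne_zero 1) (not_isUnit_X_sub_C 1)).1 hmod)
      (by norm_num)
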